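/- arXiv:math/0512251 — 2 statements merged into one kernel-verified Lean document; each statement's English description precedes it below -/
import Mathlib

section
/- Let G be a topological abelian group and H ⊆ G an open subgroup that is divisible. Then every continuous homomorphism h : H → ℝ/ℤ extends to a continuous homomorphism G → ℝ/ℤ. -/
/-!
Since `ℝ/ℤ` is divisible, it is an injective `ℤ`-module, so `h` extends to an abstract
homomorphism `G →+ ℝ/ℤ`. Any such extension is continuous on the open subgroup `H`, hence
continuous at `0`, hence continuous everywhere.
-/

theorem AddMonoidHom.continuous_of_continuous_comp_subtype {G A : Type*} [AddGroup G]
    [TopologicalSpace G] [IsTopologicalAddGroup G] [AddMonoid A] [TopologicalSpace A]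
    [ContinuousAdd A] {H : AddSubgroup G} (hH : IsOpen (H : Set G)) (φ : G →+ A)
    (hφ : Continuous (φ.comp H.subtype)) : Continuous φ :=
  have hφH : ContinuousOn φ H := continuousOn_iff_continuous_domRestrict.2 hφ
  continuous_of_continuousAt_zero φ (hφH.continuousAt (hH.mem_nhds H.zero_mem))

theorem ContinuousAddMonoidHom.exists_extend_of_isOpen {G A : Type*} [AddCommGroup G]
    [TopologicalSpace G] [IsTopologicalAddGroup G] [AddCommGroup A] [TopologicalSpace A]
    [ContinuousAdd A] [DivisibleBy A ℤ] {H : AddSubgroup G} (hH : IsOpen (H : Set G))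
    (f : ContinuousAddMonoidHom H A) :
    ∃ f' : ContinuousAddMonoidHom G A, ∀ x : H, f' x = f x := by
  obtain ⟨φ, hφ⟩ := (Module.Baer.of_divisible A).extension_property_addMonoidHom
    H.subtype H.subtype_injective f.toAddMonoidHom
  have hφ_cont : Continuous φ :=
    φ.continuous_of_continuous_comp_subtype hH (hφ ▸ f.continuous)
  exact ⟨⟨φ, hφ_cont⟩, DFunLike.congr_fun hφ⟩

theorem stmt4_general {G : Type*} [AddCommGroup G] [TopologicalSpace G] [IsTopologicalAddGroup G]
    (H : AddSubgroup G) (hopen : IsOpen (H : Set G))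
    (h : ContinuousAddMonoidHom H (AddCircle (1 : ℝ))) :
    ∃ h' : ContinuousAddMonoidHom G (AddCircle (1 : ℝ)), ∀ x : H, h' (x : G) = h x :=
  h.exists_extend_of_isOpen hopen

/-- If `G` is a topological abelian group and `H ⊆ G` is an open
subgroup which is divisible, then every continuous homomorphism `h : H → ℝ/ℤ`
extends to a continuous homomorphism `G → ℝ/ℤ`. -/
theorem stmt4 {G : Type*} [AddCommGroup G] [TopologicalSpace G] [IsTopologicalAddGroup G]
    (H : AddSubgroup G) (hopen : IsOpen (H : Set G))
    (hdiv : ∀ (x : H) (n : ℕ), n ≠ 0 → ∃ y : H, n • y = x)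
    (h : ContinuousAddMonoidHom H (AddCircle (1 : ℝ))) :
    ∃ h' : ContinuousAddMonoidHom G (AddCircle (1 : ℝ)), ∀ x : H, h' (x : G) = h x :=
  stmt4_general H hopen h
end

section
/- Every continuous group homomorphism h : V → ℝ/ℤ from a real topological vector space V lifts uniquely to a continuous linear functional (continuous additive map) h̃ : V → ℝ with π ∘ h̃ = h, where π : ℝ → ℝ/ℤ is the projection. -/
/-!
A real topological vector space is contractible and locally path-connected (balanced
neighbourhoods of `0` are star-shaped), and `ℝ → ℝ/ℤ` is a covering map, so `h` has a unique
continuous lift `F` with `F 0 = 0`. For fixed `a`, the map `g ↦ -F a + F (a + g)` is another such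
lift, so uniqueness of lifts forces `F` to be additive.
-/

open Filter Topology

theorem IsTopologicalAddGroup.locallyPathConnectedSpace_of_real (V : Type*) [AddCommGroup V]
    [Module ℝ V] [TopologicalSpace V] [IsTopologicalAddGroup V] [ContinuousSMul ℝ V] :
    LocallyPathConnectedSpace V := by
  have hbasis (x : V) :
      (𝓝 x).HasBasis (fun s ↦ s ∈ 𝓝 (0 : V) ∧ Balanced ℝ s) ((x + ·) '' ·) := by
    rw [← map_add_left_nhds_zero]
    exact (nhds_basis_balanced ℝ V).map (x + ·)
  refine .of_bases hbasis fun x s ⟨hs, hbal⟩ ↦ ?_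
  exact (hbal.starConvex.isPathConnected (mem_of_mem_nhds hs)).image (continuous_const_add x)

theorem AddMonoidHom.existsUnique_lift_of_isCoveringMap {G E X : Type*}
    [AddMonoid G] [TopologicalSpace G] [ContinuousAdd G] [SimplyConnectedSpace G]
    [LocallyPathConnectedSpace G] [AddGroup E] [TopologicalSpace E] [IsTopologicalAddGroup E]
    [AddGroup X] [TopologicalSpace X] {π : E →+ X} (hπ : IsCoveringMap π)
    (h : G →+ X) (hc : Continuous h) :
    ∃! L : G →+ E, Continuous L ∧ ∀ g, π (L g) = h g := by
  obtain ⟨F, ⟨hF0, hFπ⟩, hF_unique⟩ :=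
    hπ.existsUnique_continuousMap_lifts ⟨h, hc⟩ 0 0 (by simp)
  have hF_add (a g : G) : -F a + F (a + g) = F g := by
    have hlift := hF_unique ⟨fun g ↦ -F a + F (a + g), by fun_prop⟩ ⟨by simp, funext fun g ↦ ?_⟩
    · exact congr($hlift g)
    have hFπ' := congrFun hFπ
    simp only [Function.comp_apply, ContinuousMap.coe_mk] at hFπ' ⊢
    rw [map_add, map_neg, hFπ', hFπ', map_add, neg_add_cancel_left]
  refine ⟨⟨⟨F, hF0⟩, fun a g ↦ ?_⟩, ⟨F.continuous, congrFun hFπ⟩, ?_⟩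
  · simp [← hF_add a g]
  rintro L ⟨hLc, hLπ⟩
  ext g
  exact congr($(hF_unique ⟨L, hLc⟩ ⟨map_zero L, funext hLπ⟩) g)

/-- Every continuous group homomorphism `h : V → ℝ/ℤ` from a real
topological vector space `V` lifts uniquely to a continuous additive map
`h̃ : V → ℝ` with `π ∘ h̃ = h`. -/
theorem stmt12 {V : Type*} [AddCommGroup V] [Module ℝ V] [TopologicalSpace V]
    [IsTopologicalAddGroup V] [ContinuousSMul ℝ V]
    (h : V →+ AddCircle (1 : ℝ)) (hc : Continuous h) :
    ∃! htil : V →+ ℝ, Continuous htil ∧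
      ∀ v : V, ((htil v : ℝ) : AddCircle (1 : ℝ)) = h v := by
  have := IsTopologicalAddGroup.locallyPathConnectedSpace_of_real V
  exact AddMonoidHom.existsUnique_lift_of_isCoveringMap
    (π := QuotientAddGroup.mk' _) (AddCircle.isCoveringMap_coe 1) h hc
end
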